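/- arXiv:quant-ph/0606002 — 2 statements merged into one kernel-verified Lean document; each statement's English description precedes it below -/
import Mathlib

section
/- Subject to the constraints α γ √2 = 1 normalized as 2|αγ|² = 1 with |α|² + |γ/k|² ≤ 1 per column unitarity, the function k²(|α|²) = (1/2)(1/|α|² + 1/(1 − |α|²)) for |α|² ∈ (0,1) attains its minimum value 2 at |α|² = 1/2. Consequently the maximal success probability P₀ = k^{−2} for the transformation |11⟩ → |20⟩ equals 1/2. -/
/-- the function `k²(x) = (1/2)(1/x + 1/(1−x))` for `x = |α|² ∈ (0,1)`
attains its minimum value `2` at `x = 1/2`; consequently the maximal success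
probability `P₀ = k⁻²` for the transformation `|11⟩ → |20⟩` equals `1/2`. -/
theorem max_success_probability :
    ((1 / 2 : ℝ) * (1 / (1 / 2 : ℝ) + 1 / (1 - 1 / 2 : ℝ)) = 2) ∧
    (∀ x : ℝ, 0 < x → x < 1 → 2 ≤ (1 / 2) * (1 / x + 1 / (1 - x))) ∧
    (1 / ((1 / 2 : ℝ) * (1 / (1 / 2 : ℝ) + 1 / (1 - 1 / 2 : ℝ))) = 1 / 2) ∧
    (∀ x : ℝ, 0 < x → x < 1 → 1 / ((1 / 2) * (1 / x + 1 / (1 - x))) ≤ 1 / 2) := by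
  have key : ∀ x : ℝ, 0 < x → x < 1 → 2 ≤ (1 / 2) * (1 / x + 1 / (1 - x)) := by
    intro x hx hx1
    have h1 : 0 < 1 - x := by linarith
    rw [div_add_div _ _ (ne_of_gt hx) (ne_of_gt h1)]
    have hpos : 0 < x * (1 - x) := mul_pos hx h1
    rw [mul_div_assoc', le_div_iff₀ hpos]
    nlinarith [sq_nonneg (x - 1/2)]
  refine ⟨by norm_num, key, by norm_num, ?_⟩
  intro x hx hx1
  have h := key x hx hx1
  have hpos : 0 < (1 / 2) * (1 / x + 1 / (1 - x)) := by linarith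
  rw [div_le_div_iff₀ hpos (by norm_num)]
  linarith
end

section
/- For fixed nonnegative reals r₁ = |e₁|, r₂ = |e₂| and complex numbers with constraint α*γ + β*δ + ⟨e₁, e₂⟩ = 0 where e₁, e₂ ∈ C^m and ⟨e₁,e₂⟩ = r₁ r₂ cos θ for some θ, the quantity k² = |γ|² + |δ|² + |α*γ + β*δ|² / (|cos θ| (1 − |α|² − |β|²)) is minimized over θ at |cos θ| = 1, where it equals |γ|² + |δ|² + |α*γ + β*δ|²/(1 − |α|² − |β|²). Hence using m ≥ 1 ancilla modes cannot yield a larger success probability k^{−2} than a single ancilla mode. -/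
open scoped ComplexConjugate

/-- with `|α|² + |β|² < 1`, the quantity
`k²(θ) = |γ|² + |δ|² + |α*γ + β*δ|²/(|cos θ|(1 − |α|² − |β|²))` is minimized over
`0 < |cos θ| ≤ 1` at `|cos θ| = 1`, where it equals the single-ancilla value
`|γ|² + |δ|² + |α*γ + β*δ|²/(1 − |α|² − |β|²)`; hence the success probability `k⁻²`
with `m ≥ 1` ancilla modes never exceeds that of a single ancilla mode. -/
theorem one_ancilla_is_enough (α β γ δ : ℂ)
    (h : ‖α‖ ^ 2 + ‖β‖ ^ 2 < 1)
    (t : ℝ) (ht₀ : 0 < t) (ht₁ : t ≤ 1) :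
    (‖γ‖ ^ 2 + ‖δ‖ ^ 2 +
        ‖conj α * γ + conj β * δ‖ ^ 2 /
          (1 - ‖α‖ ^ 2 - ‖β‖ ^ 2)
      ≤ ‖γ‖ ^ 2 + ‖δ‖ ^ 2 +
        ‖conj α * γ + conj β * δ‖ ^ 2 /
          (t * (1 - ‖α‖ ^ 2 - ‖β‖ ^ 2))) ∧
    ((‖γ‖ ^ 2 + ‖δ‖ ^ 2 +
        ‖conj α * γ + conj β * δ‖ ^ 2 /
          (t * (1 - ‖α‖ ^ 2 - ‖β‖ ^ 2)))⁻¹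
      ≤ (‖γ‖ ^ 2 + ‖δ‖ ^ 2 +
        ‖conj α * γ + conj β * δ‖ ^ 2 /
          (1 - ‖α‖ ^ 2 - ‖β‖ ^ 2))⁻¹) := by
  set D := 1 - ‖α‖ ^ 2 - ‖β‖ ^ 2 with hD
  have hDpos : 0 < D := by simp [hD]; linarith
  have hnum : 0 ≤ ‖conj α * γ + conj β * δ‖ ^ 2 := sq_nonneg _
  have hdiv : ‖conj α * γ + conj β * δ‖ ^ 2 / D
      ≤ ‖conj α * γ + conj β * δ‖ ^ 2 / (t * D) := by
    apply div_le_div_of_nonneg_left hnum (by positivity)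
    nlinarith
  have h1 : ‖γ‖ ^ 2 + ‖δ‖ ^ 2 +
      ‖conj α * γ + conj β * δ‖ ^ 2 / D
    ≤ ‖γ‖ ^ 2 + ‖δ‖ ^ 2 +
      ‖conj α * γ + conj β * δ‖ ^ 2 / (t * D) := by linarith
  refine ⟨h1, ?_⟩
  have hle0 : 0 ≤ ‖γ‖ ^ 2 + ‖δ‖ ^ 2 +
      ‖conj α * γ + conj β * δ‖ ^ 2 / D := by positivity
  rcases eq_or_lt_of_le hle0 with he | hlt
  · have hA : ‖γ‖ ^ 2 + ‖δ‖ ^ 2 = 0 := by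
      have := div_nonneg hnum hDpos.le
      nlinarith [sq_nonneg ‖γ‖, sq_nonneg ‖δ‖]
    have hN : ‖conj α * γ + conj β * δ‖ ^ 2 = 0 := by
      have h2 : ‖conj α * γ + conj β * δ‖ ^ 2 / D = 0 := by linarith
      field_simp at h2
      simpa using h2
    simp [hA, hN]
  · exact inv_anti₀ hlt h1
end
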